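/- For the system f1 = f2 = f3 = f4 = 0 below: (i) there exist two distinct positive real numbers t such that (x1, x2, x12, x13) = (t, t, t, 1) is a solution; (ii) there exist two distinct pairs (a, b) of positive real numbers with a ≠ b such that (x1, x2, x12, x13) = (a, a, b, 1) is a solution. -/
import Mathlib


/-- A quadruple `(x1, x2, x12, x13)` of positive reals solving the Einstein system for
`Ad(Sp(1)×Sp(1)×Sp(1))`-invariant metrics on `V₂ℍ³ = Sp(3)/Sp(1)` (normalized by
`x23 = 1`). -/
def IsEinsteinSolV2H3 (v : ℝ × ℝ × ℝ × ℝ) : Prop :=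
  let x1 := v.1; let x2 := v.2.1; let x12 := v.2.2.1; let x13 := v.2.2.2
  0 < x1 ∧ 0 < x2 ∧ 0 < x12 ∧ 0 < x13 ∧
  x1^2*x12^2*x2 + x1^2*x13^2*x2 - x1*x12^2*x13^2*x2^2 - 2*x1*x12^2*x13^2
    - x1*x13^2*x2^2 + 2*x12^2*x13^2*x2 = 0 ∧
  3*x1*x13*x2 - 2*x12^3*x2 + 2*x12^2*x13*x2^2 + 4*x12^2*x13 + 2*x12*x13^2*x2
    - 16*x12*x13*x2 + 2*x12*x2 + 5*x13*x2^2 = 0 ∧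
  3*x1*x12^2 - 3*x1*x13^2 + 4*x12^3*x13 - 16*x12^2*x13 - 4*x12*x13^3
    + 16*x12*x13^2 - 3*x13^2*x2 = 0 ∧
  -3*x1*x12 + 3*x12*x13^2*x2 - 16*x12*x13^2 + 16*x12*x13 + 4*x13^3 - 4*x13 = 0

/-- Jensen solutions: `(t,t,t,1)` is a solution iff `7t² − 16t + 6 = 0` (and `t > 0`). -/
lemma jensen_sol {t : ℝ} (ht : 0 < t) (h : 7*t^2 - 16*t + 6 = 0) :
    IsEinsteinSolV2H3 (t, t, t, 1) := by
  refine ⟨ht, ht, ht, one_pos, by ring, by ring, by linear_combination t * h, by ring⟩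

/-- ADN solutions: if `Q b = 2b⁴−8b³+17b²−32b+18 = 0` and `a(3b²−6) = −4b³+16b²−12b`,
then `(a,a,b,1)` is a solution (given positivity). -/
lemma adn_sol {a b : ℝ} (ha : 0 < a) (hb : 0 < b)
    (hQ : 2*b^4 - 8*b^3 + 17*b^2 - 32*b + 18 = 0)
    (hr : a * (3*b^2 - 6) = -4*b^3 + 16*b^2 - 12*b)
    (hd : 3*b^2 - 6 ≠ 0) :
    IsEinsteinSolV2H3 (a, a, b, 1) := by
  refine ⟨ha, ha, hb, one_pos, by ring, ?_, by linear_combination hr, by ring⟩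
  -- f2 = 2(a²b² + 4a² − ab³ − 6ab + 2b²); we show it times (3b²−6)² is zero
  have key : (a^2*b^2 + 4*a^2 - a*b^3 - 6*a*b + 2*b^2) * (3*b^2 - 6)^2 = 0 := by
    linear_combination ((a*(3*b^2-6) + (-4*b^3 + 16*b^2 - 12*b))*(b^2+4)
      - (3*b^2-6)*(b^3+6*b)) * hr + (2*b^2*(7*b^2-16*b+6)) * hQ
  rcases mul_eq_zero.mp key with h2 | h2
  · linear_combination 2 * h2
  · exact absurd (sq_eq_zero_iff.mp h2) hd

/-- Existence of a root of the quartic `Q` in a given interval with an (exact) sign change. -/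
lemma quartic_root (l u : ℝ) (hlu : l ≤ u)
    (hl : 0 ≤ 2*l^4 - 8*l^3 + 17*l^2 - 32*l + 18)
    (hu : 2*u^4 - 8*u^3 + 17*u^2 - 32*u + 18 ≤ 0) :
    ∃ b, l ≤ b ∧ b ≤ u ∧ 2*b^4 - 8*b^3 + 17*b^2 - 32*b + 18 = 0 := by
  have hc : ContinuousOn (fun b : ℝ => 2*b^4 - 8*b^3 + 17*b^2 - 32*b + 18) (Set.Icc l u) := by
    fun_prop
  have h0 : (0:ℝ) ∈ Set.Icc (2*u^4 - 8*u^3 + 17*u^2 - 32*u + 18)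
      (2*l^4 - 8*l^3 + 17*l^2 - 32*l + 18) := ⟨hu, hl⟩
  obtain ⟨b, hbmem, hb0⟩ := intermediate_value_Icc' hlu hc h0
  exact ⟨b, hbmem.1, hbmem.2, hb0⟩

/-- Existence of a root of the quartic with sign change reversed. -/
lemma quartic_root' (l u : ℝ) (hlu : l ≤ u)
    (hl : 2*l^4 - 8*l^3 + 17*l^2 - 32*l + 18 ≤ 0)
    (hu : 0 ≤ 2*u^4 - 8*u^3 + 17*u^2 - 32*u + 18) :
    ∃ b, l ≤ b ∧ b ≤ u ∧ 2*b^4 - 8*b^3 + 17*b^2 - 32*b + 18 = 0 := by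
  have hc : ContinuousOn (fun b : ℝ => 2*b^4 - 8*b^3 + 17*b^2 - 32*b + 18) (Set.Icc l u) := by
    fun_prop
  have h0 : (0:ℝ) ∈ Set.Icc (2*l^4 - 8*l^3 + 17*l^2 - 32*l + 18)
      (2*u^4 - 8*u^3 + 17*u^2 - 32*u + 18) := ⟨hl, hu⟩
  obtain ⟨b, hbmem, hb0⟩ := intermediate_value_Icc hlu hc h0
  exact ⟨b, hbmem.1, hbmem.2, hb0⟩

/-- **Theorem 4.1(1), Jensen and ADN metrics.**  For the Einstein system on
`V₂ℍ³ = Sp(3)/Sp(1)`: (i) there exist two distinct positive reals `t` such that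
`(t, t, t, 1)` is a solution (Jensen's metrics); (ii) there exist two distinct pairs `(a, b)`
of positive reals with `a ≠ b` such that `(a, a, b, 1)` is a solution (the ADN metrics). -/
theorem jensen_and_ADN_einstein_V2H3 :
    (∃ t s : ℝ, 0 < t ∧ 0 < s ∧ t ≠ s ∧
      IsEinsteinSolV2H3 (t, t, t, 1) ∧ IsEinsteinSolV2H3 (s, s, s, 1)) ∧
    (∃ a b a' b' : ℝ, 0 < a ∧ 0 < b ∧ 0 < a' ∧ 0 < b' ∧ a ≠ b ∧ a' ≠ b' ∧
      (a, b) ≠ (a', b') ∧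
      IsEinsteinSolV2H3 (a, a, b, 1) ∧ IsEinsteinSolV2H3 (a', a', b', 1)) := by
  constructor
  · -- Jensen: t = (8 ± √22)/7
    have h22 : Real.sqrt 22 ^ 2 = 22 := Real.sq_sqrt (by norm_num)
    have h22lt : Real.sqrt 22 < 5 := by
      nlinarith [Real.sqrt_nonneg 22]
    have h22pos : 0 < Real.sqrt 22 := Real.sqrt_pos.mpr (by norm_num)
    refine ⟨(8 + Real.sqrt 22)/7, (8 - Real.sqrt 22)/7, by positivity, by linarith, ?_, ?_, ?_⟩
    · apply ne_of_gt; linarith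
    · exact jensen_sol (by positivity) (by linear_combination h22 / 7)
    · exact jensen_sol (by linarith) (by linear_combination h22 / 7)
  · -- ADN: roots of the quartic near 0.805 and 2.585
    obtain ⟨b, hbl, hbu, hbQ⟩ := quartic_root (4/5) (81/100) (by norm_num) (by norm_num)
      (by norm_num)
    obtain ⟨b', hbl', hbu', hbQ'⟩ := quartic_root' (129/50) (259/100) (by norm_num)
      (by norm_num) (by norm_num)
    -- first pair: b ∈ [0.8, 0.81], denominator 3b²−6 < 0
    have hdneg : 3*b^2 - 6 < 0 := by nlinarith
    have hnneg : -4*b^3 + 16*b^2 - 12*b < 0 := by nlinarith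
    set a : ℝ := (-4*b^3 + 16*b^2 - 12*b) / (3*b^2 - 6) with ha_def
    have ha : 0 < a := div_pos_of_neg_of_neg hnneg hdneg
    have hr : a * (3*b^2 - 6) = -4*b^3 + 16*b^2 - 12*b := div_mul_cancel₀ _ (ne_of_lt hdneg)
    have hab : a < b := by
      have : a < 1/2 := by
        rw [ha_def, div_lt_iff_of_neg hdneg]
        nlinarith
      linarith
    -- second pair: b' ∈ [2.58, 2.59], denominator > 0
    have hdpos : 0 < 3*b'^2 - 6 := by nlinarith
    have hnpos : 0 < -4*b'^3 + 16*b'^2 - 12*b' := by nlinarith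
    set a' : ℝ := (-4*b'^3 + 16*b'^2 - 12*b') / (3*b'^2 - 6) with ha'_def
    have ha' : 0 < a' := div_pos hnpos hdpos
    have hr' : a' * (3*b'^2 - 6) = -4*b'^3 + 16*b'^2 - 12*b' :=
      div_mul_cancel₀ _ (ne_of_gt hdpos)
    have hab' : a' < b' := by
      have : a' < 1 := by
        rw [ha'_def, div_lt_one hdpos]
        nlinarith
      linarith
    refine ⟨a, b, a', b', ha, by linarith, ha', by linarith, ne_of_lt hab, ne_of_lt hab',
      ?_, ?_, ?_⟩
    · intro h
      have hb2 : b = b' := congrArg Prod.snd h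
      linarith [hb2 ▸ hbu]
    · exact adn_sol ha (by linarith) hbQ hr (ne_of_lt hdneg)
    · exact adn_sol ha' (by linarith) hbQ' hr' (ne_of_gt hdpos)
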